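/- Proximity formula for multiplicities: let W be an RVT code word padded with infinitely many trailing R's, and let m_j denote the leading entry of PC(L^j(W)). Define p_j proximate to p_i if j = i+1, or if the symbols of W in positions i+2 through j (1-indexed after the base point) form a block V T^{j−i−2} (i.e. position i+2 carries V and positions i+3,…,j carry T). Then for every i ≥ 0, m_i = Σ m_j over all j proximate to i (the sum being finite since m_j = 1 eventually and each i has finitely many proximate j). -/

import Mathlib

/-- The three symbols of an RVT code word. -/
inductive RVT : Type
  | R | V | T
deriving DecidableEq, Repr

/-- Replace a leading run of `T`'s by `R`'s. -/
def deT : List RVT → List RVT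
  | RVT.T :: xs => RVT.R :: deT xs
  | xs => xs

/-- If the word begins with `V`, replace that `V` and the immediately
following `T`'s by `R`'s. -/
def reg : List RVT → List RVT
  | RVT.V :: xs => RVT.R :: deT xs
  | xs => xs

/-- The lifted word `L(W)`: remove the first symbol (an `R`), then replace a
leading maximal critical block `V Tᵗ` by `R^(t+1)`. -/
def lift (w : List RVT) : List RVT := reg w.tail

/-- Length of the leading run of `T`'s. -/
def countT : List RVT → ℕ
  | RVT.T :: xs => countT xs + 1
  | _ => 0

/-- Fueled version of the front-end recursion for the Puiseux characteristic
(Theorem PCfront): base case `[1]` on all-`R` words; given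
`PC(L(W)) = [l0; l1, ..., lg]`,
(A) if `W` begins `RR` then `PC(W) = [l0; l1+l0, ..., lg+l0]`;
(B) if `W` begins `R V T^t R` or `W = R V T^t` then
`PC(W) = [(t+2)l0; (t+3)l0, l1+l0, ..., lg+l0]`;
(C) if `W` begins `R V T^t V` then `PC(W) = [l1; l1+l0, ..., lg+l0]`. -/
def PCf : ℕ → List RVT → List ℕ
  | 0, _ => [1]
  | _ + 1, [] => [1]
  | fuel + 1, w@(_ :: rest) =>
    if w.all (· = RVT.R) then [1]
    else
      let p := PCf fuel (lift w)
      let l0 := p.headD 1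
      let tl := p.tail
      match rest with
      | RVT.V :: xs =>
        match xs.drop (countT xs) with
        | RVT.V :: _ => tl.headD 1 :: tl.map (· + l0)                                -- case (C)
        | _ => ((countT xs + 2) * l0) :: ((countT xs + 3) * l0) :: tl.map (· + l0)   -- case (B)
      | _ => l0 :: tl.map (· + l0)                                                   -- case (A)

/-- The Puiseux characteristic `PC(W)` computed by the front-end recursion. -/
def PC (w : List RVT) : List ℕ := PCf w.length w

/-- A valid RVT code word: begins with `R`, and `T` occurs only immediately
after a `V` or a `T`. -/
def ValidRVT (w : List RVT) : Prop :=
  w.head? = some RVT.R ∧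
  ∀ i, w[i + 1]? = some RVT.T → (w[i]? = some RVT.V ∨ w[i]? = some RVT.T)

/-- The function `E` on strings, with `E_T[a;b] = [a;a+b]`, `E_V[a;b] = [b;a+b]`,
`E_R = E_T`, and base value `E(empty) = [1;2]`; the leftmost symbol acts last. -/
def Efun : List RVT → ℕ × ℕ
  | [] => (1, 2)
  | RVT.V :: q => ((Efun q).2, (Efun q).1 + (Efun q).2)
  | _ :: q => ((Efun q).1, (Efun q).1 + (Efun q).2)

/-- The Euclidean-type recursion: `Euc(1,2)` is the empty word; for coprime
`a < b`, if `b < 2a` then `Euc(a,b) = V · Euc(b-a,a)`, and if `b > 2a` then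
`Euc(a,b) = T · Euc(a,b-a)`. -/
def Euc (a b : ℕ) : List RVT :=
  if a = 1 ∧ b = 2 then []
  else if _h1 : 0 < a ∧ a < b ∧ b < 2 * a then RVT.V :: Euc (b - a) a
  else if _h2 : 0 < a ∧ a < b ∧ 2 * a < b then RVT.T :: Euc a (b - a)
  else []
termination_by a + b
decreasing_by all_goals omega


/-!
Write `m(w)` for the leading entry of `PC w` and `m₂(w)` for the second one. The front-end
recursion gives `m(w) = m(L w)` unless `w = x V Tᵗ rem`, and then `L w = Rᵗ⁺¹ rem`. Putting
`h = m(R rem)`: if `rem` does not start with `V` then `m(w) = (t + 2) h`; otherwise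
`m(w) = m₂(Rᵗ⁺¹ rem)`, and since a leading `R` keeps `m` and adds it to `m₂`, while
`m₂(x V ys) = m(x V ys) + m(L(x V ys))`, this is `(t + 1) h + m(L(R rem))` as well. That is the
sum of the multiplicities over the block `V Tᵗ` and the point following it.
On the side of `W`, past its first symbol `L^i W` is `W` from position `i + 1` on with its leading
`T`'s turned into `R`'s, so the points proximate to `p_i` are read off from `W` itself.
-/

open RVT

def mult (w : List RVT) : ℕ := (PC w).headD 1

def mult₂ (w : List RVT) : ℕ := (PC w).tail.headD 1

lemma length_deT (l : List RVT) : (deT l).length = l.length := by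
  induction l with
  | nil => rfl
  | cons x xs ih => cases x <;> simp [deT, ih]

lemma deT_eq_replicate_append (l : List RVT) :
    deT l = List.replicate (countT l) R ++ l.drop (countT l) := by
  induction l with
  | nil => rfl
  | cons x xs ih => cases x <;> simp [deT, countT, List.replicate_succ, ih]

lemma countT_le_length (l : List RVT) : countT l ≤ l.length := by
  induction l with
  | nil => simp [countT]
  | cons x xs ih => cases x <;> simp only [countT, List.length_cons] <;> omega

lemma getD_of_lt_countT {l : List RVT} {k : ℕ} (h : k < countT l) : l.getD k R = T := by
  induction l generalizing k with
  | nil => simp [countT] at h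
  | cons x xs ih =>
    cases x <;> simp only [countT, Nat.not_lt_zero] at h
    cases k with
    | zero => rfl
    | succ k => exact ih (by omega)

lemma getD_countT_ne_T (l : List RVT) : l.getD (countT l) R ≠ T := by
  induction l with
  | nil => simp
  | cons x xs ih => cases x <;> simp_all [countT]

lemma reg_eq_self {l : List RVT} (h : l.head? ≠ some V) : reg l = l := by
  rcases l with _ | ⟨_ | _ | _, _⟩ <;> simp_all [reg]

lemma deT_eq_self {l : List RVT} (h : l.head? ≠ some T) : deT l = l := by
  rcases l with _ | ⟨_ | _ | _, _⟩ <;> simp_all [deT]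

lemma head?_deT_eq_V_iff {l : List RVT} : (deT l).head? = some V ↔ l.head? = some V := by
  rcases l with _ | ⟨_ | _ | _, _⟩ <;> simp [deT]

lemma tail_reg_deT {u : List RVT} (h : u.head? = some R → u.tail.head? ≠ some T) :
    (reg (deT u)).tail = deT u.tail := by
  rcases u with _ | ⟨_ | _ | _, l⟩
  · rfl
  · rcases l with _ | ⟨_ | _ | _, _⟩ <;> simp_all [deT, reg]
  · rfl
  · rfl

lemma List.getD_drop {α : Type*} (l : List α) (m k : ℕ) (d : α) :
    (l.drop m).getD k d = l.getD (m + k) d := by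
  simp [List.getD_eq_getElem?_getD, List.getElem?_drop]

lemma getD_eq_V_iff {W : List RVT} {n : ℕ} : W.getD n R = V ↔ (W.drop n).head? = some V := by
  rw [List.head?_drop, List.getD_eq_getElem?_getD]
  cases W[n]? <;> simp

lemma length_lift (w : List RVT) : (lift w).length = w.length - 1 := by
  rcases w with _ | ⟨_, _ | ⟨_ | _ | _, _⟩⟩ <;> simp [lift, reg, length_deT]

lemma lift_cons_V (x : RVT) (xs : List RVT) :
    lift (x :: V :: xs) = List.replicate (countT xs + 1) R ++ xs.drop (countT xs) := by
  simp [lift, reg, deT_eq_replicate_append, List.replicate_succ]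

lemma lift_cons_of_head_ne_V (x : RVT) {l : List RVT} (h : l.head? ≠ some V) :
    lift (x :: l) = l :=
  reg_eq_self h

lemma PC_lift_cons_eq_PCf (x : RVT) (rest : List RVT) :
    PC (lift (x :: rest)) = PCf rest.length (lift (x :: rest)) := by
  rw [PC, length_lift, List.length_cons, Nat.add_sub_cancel]

lemma PC_of_all_R {w : List RVT} (h : w.all (· = R)) : PC w = [1] := by
  rcases w with _ | ⟨x, rest⟩
  · rfl
  · simp only [PC, List.length_cons, PCf, h, if_true]

lemma PC_cons_of_head_ne_V (x : RVT) {rest : List RVT} (hne : rest.head? ≠ some V)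
    (hR : (x :: rest).all (· = R) = false) :
    PC (x :: rest) = mult rest :: (PC rest).tail.map (· + mult rest) := by
  rw [PC, List.length_cons, PCf, if_neg (by simp [hR]), ← PC_lift_cons_eq_PCf,
    lift_cons_of_head_ne_V x hne]
  rcases rest with _ | ⟨_ | _ | _, _⟩
  all_goals first | rfl | simp at hne

lemma PC_cons_V_of_drop_countT_head_ne_V (x : RVT) {xs : List RVT}
    (hne : (xs.drop (countT xs)).head? ≠ some V) :
    PC (x :: V :: xs) =
      ((countT xs + 2) * mult (lift (x :: V :: xs))) ::
        ((countT xs + 3) * mult (lift (x :: V :: xs))) ::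
          (PC (lift (x :: V :: xs))).tail.map (· + mult (lift (x :: V :: xs))) := by
  rw [PC, List.length_cons, PCf, if_neg (by simp), ← PC_lift_cons_eq_PCf]
  rcases h : xs.drop (countT xs) with _ | ⟨_ | _ | _, _⟩
  all_goals first | simp only [h]; rfl | simp [h] at hne

lemma PC_cons_V_of_drop_countT_head_eq_V (x : RVT) {xs : List RVT}
    (h : (xs.drop (countT xs)).head? = some V) :
    PC (x :: V :: xs) =
      (PC (lift (x :: V :: xs))).tail.headD 1 ::
        (PC (lift (x :: V :: xs))).tail.map (· + mult (lift (x :: V :: xs))) := by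
  obtain ⟨ys, hys⟩ : ∃ ys, xs.drop (countT xs) = V :: ys :=
    ⟨_, List.eq_cons_of_mem_head? h⟩
  rw [PC, List.length_cons, PCf, if_neg (by simp), ← PC_lift_cons_eq_PCf]
  simp only [hys]
  rfl

lemma mult_eq_mult_lift {w : List RVT} (h : w.tail.head? ≠ some V) : mult w = mult (lift w) := by
  rcases w with _ | ⟨x, rest⟩
  · rfl
  rw [List.tail_cons] at h
  rw [lift_cons_of_head_ne_V x h]
  cases hR : (x :: rest).all (· = R)
  · rw [mult, PC_cons_of_head_ne_V x h hR]
    rfl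
  · rw [List.all_cons, Bool.and_eq_true] at hR
    rw [mult, mult, PC_of_all_R hR.2, PC_of_all_R (by simpa using hR)]

lemma two_le_length_PC {w : List RVT} (hV : V ∈ w.tail) : 2 ≤ (PC w).length := by
  induction hn : w.length using Nat.strong_induction_on generalizing w with
  | _ n ih =>
    obtain ⟨x, rest, rfl⟩ : ∃ x rest, w = x :: rest := by
      rcases w with _ | ⟨x, rest⟩
      · simp at hV
      · exact ⟨x, rest, rfl⟩
    have hR : (x :: rest).all (· = R) = false := by
      rw [List.all_eq_false]
      exact ⟨V, List.mem_cons_of_mem x hV, by simp⟩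
    have ih' : ∀ u : List RVT, u.length < n → V ∈ u.tail → 2 ≤ (PC u).length :=
      fun u hu hVu => ih u.length hu hVu rfl
    rcases rest with _ | ⟨y, xs⟩
    · simp at hV
    by_cases hy : y = V
    · subst hy
      by_cases hC : (xs.drop (countT xs)).head? = some V
      · rw [PC_cons_V_of_drop_countT_head_eq_V x hC]
        have hlift : 2 ≤ (PC (lift (x :: V :: xs))).length := by
          refine ih' _ ?_ ?_
          · rw [length_lift]; simp [← hn]
          · simp [lift_cons_V, List.mem_of_mem_head? hC]
        simp only [List.length_cons, List.length_map, List.length_tail]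
        omega
      · simp [PC_cons_V_of_drop_countT_head_ne_V x hC]
    · rw [PC_cons_of_head_ne_V x (by simpa using hy) hR]
      have hrest : 2 ≤ (PC (y :: xs)).length :=
        ih' _ (by simp [← hn]) ((List.mem_cons.1 hV).resolve_left (Ne.symm hy))
      simp only [List.length_cons, List.length_map, List.length_tail]
      omega

lemma PC_eq_cons_cons {w : List RVT} (hV : V ∈ w.tail) :
    ∃ bs, PC w = mult w :: mult₂ w :: bs := by
  have h2 := two_le_length_PC hV
  rcases h : PC w with _ | ⟨a, _ | ⟨b, bs⟩⟩
  all_goals simp only [h, List.length_nil, List.length_cons] at h2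
  · omega
  · omega
  · exact ⟨bs, by simp [mult, mult₂, h]⟩

lemma mult₂_cons_of_head_ne_V (x : RVT) {rest : List RVT} (hne : rest.head? ≠ some V)
    (hV : V ∈ rest.tail) : mult₂ (x :: rest) = mult₂ rest + mult rest := by
  have hR : (x :: rest).all (· = R) = false := by
    rw [List.all_eq_false]
    exact ⟨V, List.mem_cons_of_mem x (List.mem_of_mem_tail hV), by simp⟩
  obtain ⟨bs, h⟩ := PC_eq_cons_cons hV
  rw [mult₂, PC_cons_of_head_ne_V x hne hR, h]
  rfl

lemma mult_cons_V_of_drop_countT_head_ne_V (x : RVT) {xs : List RVT}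
    (hne : (xs.drop (countT xs)).head? ≠ some V) :
    mult (x :: V :: xs) = (countT xs + 2) * mult (lift (x :: V :: xs)) := by
  rw [mult, PC_cons_V_of_drop_countT_head_ne_V x hne]
  rfl

lemma mult_cons_V_of_drop_countT_head_eq_V (x : RVT) {xs : List RVT}
    (h : (xs.drop (countT xs)).head? = some V) :
    mult (x :: V :: xs) = mult₂ (lift (x :: V :: xs)) := by
  rw [mult, PC_cons_V_of_drop_countT_head_eq_V x h]
  rfl

/-- In case (B) both entries are multiples of `l0`; in case (C) the second one is `l1 + l0`. -/
lemma mult₂_cons_V (x : RVT) (xs : List RVT) :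
    mult₂ (x :: V :: xs) = mult (x :: V :: xs) + mult (lift (x :: V :: xs)) := by
  by_cases hC : (xs.drop (countT xs)).head? = some V
  · obtain ⟨bs, hl⟩ := PC_eq_cons_cons (w := lift (x :: V :: xs))
      (by simp [lift_cons_V, List.mem_of_mem_head? hC])
    rw [mult_cons_V_of_drop_countT_head_eq_V x hC, mult₂, PC_cons_V_of_drop_countT_head_eq_V x hC,
      hl]
    rfl
  · rw [mult_cons_V_of_drop_countT_head_ne_V x hC, mult₂,
      PC_cons_V_of_drop_countT_head_ne_V x hC]
    simp only [List.tail_cons, List.headD_cons]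
    ring

lemma mult_replicate_append (k : ℕ) (l : List RVT) :
    mult (List.replicate (k + 1) R ++ l) = mult (R :: l) := by
  induction k with
  | zero => rfl
  | succ k ih =>
    rw [List.replicate_succ, List.cons_append, mult_eq_mult_lift (by simp [List.replicate_succ]),
      lift_cons_of_head_ne_V _ (by simp [List.replicate_succ]), ih]

lemma mult₂_replicate_append_V (k : ℕ) (ys : List RVT) :
    mult₂ (List.replicate (k + 1) R ++ V :: ys) =
      mult₂ (R :: V :: ys) + k * mult (R :: V :: ys) := by
  induction k with
  | zero => simp
  | succ k ih =>
    rw [List.replicate_succ, List.cons_append,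
      mult₂_cons_of_head_ne_V _ (by simp [List.replicate_succ]) (by simp [List.replicate_succ]),
      ih, mult_replicate_append]
    ring

lemma mult_cons_V (x : RVT) (xs : List RVT) :
    mult (x :: V :: xs) = (countT xs + 1) * mult (R :: xs.drop (countT xs)) +
      mult (lift (R :: xs.drop (countT xs))) := by
  by_cases hC : (xs.drop (countT xs)).head? = some V
  · rw [mult_cons_V_of_drop_countT_head_eq_V x hC, lift_cons_V, List.eq_cons_of_mem_head? hC,
      mult₂_replicate_append_V, mult₂_cons_V]
    ring
  · rw [mult_cons_V_of_drop_countT_head_ne_V x hC, lift_cons_V, mult_replicate_append,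
      ← mult_eq_mult_lift (by simpa using hC)]
    ring

lemma ValidRVT.head?_tail_drop_ne_T {W : List RVT} (hW : ValidRVT W) (n : ℕ)
    (h : (W.drop n).head? = some R) : (W.drop n).tail.head? ≠ some T := by
  intro hT
  rw [List.head?_drop] at h
  rw [List.tail_drop, List.head?_drop] at hT
  rcases hW.2 n hT with hn | hn <;> simp [hn] at h

lemma ValidRVT.tail_eq_deT {W : List RVT} (hW : ValidRVT W) : W.tail = deT (W.drop 1) := by
  rw [List.drop_one, deT_eq_self]
  intro hT
  rw [List.head?_tail] at hT
  rcases hW.2 0 hT with h | h <;> simp [← List.head?_eq_getElem?, hW.1] at h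

lemma ValidRVT.tail_iterate_lift {W : List RVT} (hW : ValidRVT W) (i : ℕ) :
    (lift^[i] W).tail = deT (W.drop (i + 1)) := by
  induction i with
  | zero => exact hW.tail_eq_deT
  | succ i ih =>
    rw [Function.iterate_succ_apply', lift, ih, tail_reg_deT (hW.head?_tail_drop_ne_T _),
      List.tail_drop]

lemma ValidRVT.mult_iterate_lift_succ {W : List RVT} (hW : ValidRVT W) {i : ℕ}
    (hV : W.getD (i + 1) R ≠ V) : mult (lift^[i] W) = mult (lift^[i + 1] W) := by
  rw [Function.iterate_succ_apply', ← mult_eq_mult_lift]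
  rwa [hW.tail_iterate_lift, Ne, head?_deT_eq_V_iff, ← getD_eq_V_iff]

lemma ValidRVT.iterate_lift_eq_cons_V {W : List RVT} (hW : ValidRVT W) {i : ℕ}
    (hV : W.getD (i + 1) R = V) : ∃ x, lift^[i] W = x :: V :: W.drop (i + 2) := by
  have hdrop : W.drop (i + 1) = V :: W.drop (i + 1 + 1) := by
    rw [getD_eq_V_iff] at hV
    conv_rhs => rw [← List.tail_drop]
    rcases h : W.drop (i + 1) with _ | ⟨a, l⟩ <;> simp_all
  have htail := hW.tail_iterate_lift i
  rw [hdrop, deT_eq_self (by simp)] at htail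
  rcases h : lift^[i] W with _ | ⟨x, l⟩
  · simp [h] at htail
  · exact ⟨x, by simpa [h] using htail⟩

lemma iterate_lift_block {w : List RVT} {n : ℕ} {x : RVT} {xs : List RVT}
    (h : lift^[n] w = x :: V :: xs) {s : ℕ} (hs : s ≤ countT xs) :
    lift^[n + 1 + s] w = List.replicate (countT xs + 1 - s) R ++ xs.drop (countT xs) := by
  induction s with
  | zero => rw [Nat.add_zero, Function.iterate_succ_apply', h, lift_cons_V]; rfl
  | succ s ih =>
    obtain ⟨k, hk⟩ : ∃ k, countT xs - s = k + 1 := ⟨countT xs - s - 1, by omega⟩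
    rw [← Nat.add_assoc, Function.iterate_succ_apply', ih (by omega),
      show countT xs + 1 - s = k + 1 + 1 by omega, List.replicate_succ, List.cons_append,
      lift_cons_of_head_ne_V _ (by simp [List.replicate_succ]),
      show countT xs + 1 - (s + 1) = k + 1 by omega]

lemma mult_iterate_lift_eq_sum {w : List RVT} {n : ℕ} {x : RVT} {xs : List RVT}
    (h : lift^[n] w = x :: V :: xs) :
    mult (lift^[n] w) = ∑ j ∈ Finset.Icc (n + 1) (n + 2 + countT xs), mult (lift^[j] w) := by
  set t := countT xs
  have hblock : ∀ j ∈ Finset.Icc (n + 1) (n + 1 + t),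
      mult (lift^[j] w) = mult (R :: xs.drop t) := by
    intro j hj
    rw [Finset.mem_Icc] at hj
    obtain ⟨s, rfl⟩ : ∃ s, j = n + 1 + s := ⟨j - (n + 1), by omega⟩
    rw [iterate_lift_block h (by omega), show t + 1 - s = t - s + 1 by omega,
      mult_replicate_append]
  have hnext : lift^[n + 1 + t + 1] w = lift (R :: xs.drop t) := by
    rw [Function.iterate_succ_apply', iterate_lift_block h le_rfl, Nat.add_sub_cancel_left,
      List.replicate_one, List.singleton_append]
  rw [show n + 2 + t = n + 1 + t + 1 by omega, Finset.sum_Icc_succ_top (by omega),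
    Finset.sum_congr rfl hblock, Finset.sum_const, Nat.card_Icc, smul_eq_mul, hnext, h,
    mult_cons_V, show n + 1 + t + 1 - (n + 1) = t + 1 by omega]

abbrev Proximate (W : List RVT) (i j : ℕ) : Prop :=
  j = i + 1 ∨
    (i + 2 ≤ j ∧ W.getD (i + 1) R = V ∧ ∀ k ∈ Finset.Icc (i + 3) j, W.getD (k - 1) R = T)

lemma filter_proximate_of_ne_V {W : List RVT} {i : ℕ} [DecidablePred (Proximate W i)]
    (hV : W.getD (i + 1) R ≠ V) (N : ℕ) :
    (Finset.Icc (i + 1) (max (i + 1) N)).filter (Proximate W i) = {i + 1} := by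
  ext j
  simp only [Finset.mem_filter, Finset.mem_Icc, Finset.mem_singleton, Proximate]
  constructor
  · rintro ⟨-, rfl | ⟨-, hV', -⟩⟩
    · rfl
    · exact absurd hV' hV
  · rintro rfl
    exact ⟨⟨le_rfl, le_max_left _ _⟩, Or.inl rfl⟩

lemma filter_proximate_of_V {W : List RVT} {i : ℕ} [DecidablePred (Proximate W i)]
    (hV : W.getD (i + 1) R = V) :
    (Finset.Icc (i + 1) (max (i + 1) W.length)).filter (Proximate W i) =
      Finset.Icc (i + 1) (i + 2 + countT (W.drop (i + 2))) := by
  set t := countT (W.drop (i + 2))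
  have hlen : i + 2 + t ≤ W.length := by
    have hi : i + 1 < W.length := by
      by_contra! h
      rw [List.getD_eq_default _ _ h] at hV
      cases hV
    have := countT_le_length (W.drop (i + 2))
    rw [List.length_drop] at this
    omega
  ext j
  simp only [Finset.mem_filter, Finset.mem_Icc, Proximate]
  constructor
  · rintro ⟨⟨hj, -⟩, rfl | ⟨-, -, hT⟩⟩
    · omega
    · refine ⟨hj, not_lt.1 fun (hlt : i + 2 + t < j) => getD_countT_ne_T (W.drop (i + 2)) ?_⟩
      rw [List.getD_drop, ← hT (i + 3 + t) ⟨by omega, by omega⟩]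
      congr 1
      omega
  · rintro ⟨hj, hjt⟩
    refine ⟨⟨hj, by omega⟩, ?_⟩
    rcases hj.eq_or_lt with rfl | hlt
    · exact Or.inl rfl
    refine Or.inr ⟨hlt, hV, fun k hk => ?_⟩
    rw [show k - 1 = i + 2 + (k - i - 3) by omega, ← List.getD_drop]
    exact getD_of_lt_countT (by omega)

open scoped Classical in
/-- Proximity formula for multiplicities: with `m_j` the leading entry of
`PC(L^j(W))` (with `W` implicitly padded by trailing `R`'s, whose positions
carry symbol `R`), `p_j` is proximate to `p_i` iff `j = i+1`, or the symbols
of `W` in (1-indexed) positions `i+2, ..., j` form a block `V T^(j−i−2)`.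
Then `m_i` is the sum of the `m_j` over all `j` proximate to `i` (all such `j`
lie in `Finset.Icc (i+1) (max (i+1) W.length)`). -/
theorem statement16 (W : List RVT) (hW : ValidRVT W) (i : ℕ) :
    (PC (lift^[i] W)).headD 1 =
      ∑ j ∈ (Finset.Icc (i + 1) (max (i + 1) W.length)).filter
          (fun j => j = i + 1 ∨
            (i + 2 ≤ j ∧ W.getD (i + 1) RVT.R = RVT.V ∧
              ∀ k ∈ Finset.Icc (i + 3) j, W.getD (k - 1) RVT.R = RVT.T)),
        (PC (lift^[j] W)).headD 1 := by
  change mult (lift^[i] W) = ∑ j ∈ _, mult (lift^[j] W)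
  -- the statement decides proximity partly classically; `(_)` lets `rw` unify with that instance
  by_cases hV : W.getD (i + 1) R = V
  · obtain ⟨x, hx⟩ := hW.iterate_lift_eq_cons_V hV
    rw [@filter_proximate_of_V W i (_) hV, mult_iterate_lift_eq_sum hx]
  · rw [@filter_proximate_of_ne_V W i (_) hV, Finset.sum_singleton, hW.mult_iterate_lift_succ hV]
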